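/- Let T be a tree, v a leaf of T with unique neighbor u, and T' = T - v. Let x_e be edge variables and define x'_e = x_e for edges not incident to u, and x'_e = x_e / (1 - t·x_{uv}) for edges of T' incident to u (assuming t·x_{uv} ≠ 1). Then the multivariate matching polynomials satisfy F_T(x, t) = (1 - t·x_{uv}) · F_{T'}(x', t). -/

import Mathlib

/-!
Splitting the matchings of `T` according to whether they use `uv`, the only edge at `v`, gives
`F_T(x) = F_{T'}(x) - t x_{uv} F_{T' - u}(x)`. On the other side, a matching uses at most one edge
at `u`, so scaling the variables of those edges by `a` turns `F_{T'}(x)` into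
`a F_{T'}(x) + (1 - a) F_{T' - u}(x)`; for `a = 1 / (1 - t x_{uv})` the two sides agree.
-/

open Finset
open scoped Classical

/-- A matching of a simple graph: a finite set of edges, pairwise vertex-disjoint. -/
def IsMatchingSet {V : Type*} [DecidableEq V] (G : SimpleGraph V) (M : Finset (Sym2 V)) : Prop :=
  (∀ e ∈ M, e ∈ G.edgeSet) ∧
    ∀ e ∈ M, ∀ f ∈ M, e ≠ f → ∀ v, v ∈ e → v ∉ f

/-- The finite set of all matchings of `G` (including the empty matching). -/
noncomputable def matchings {V : Type*} [Fintype V] [DecidableEq V] (G : SimpleGraph V) :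
    Finset (Finset (Sym2 V)) :=
  Finset.univ.filter fun M => IsMatchingSet G M

/-- The multivariate matching polynomial
`F(x,t) = Σ_{M matching} (Π_{e∈M} x_e) (-t)^{|M|}`. -/
noncomputable def mmp {V : Type*} [Fintype V] [DecidableEq V] (G : SimpleGraph V)
    (x : Sym2 V → ℝ) (t : ℝ) : ℝ :=
  ∑ M ∈ matchings G, (∏ e ∈ M, x e) * (-t) ^ M.card

open SimpleGraph

section IsMatchingSet

variable {V : Type*} [DecidableEq V] {G : SimpleGraph V} {M : Finset (Sym2 V)}

theorem isMatchingSet_deleteEdges_iff {s : Set (Sym2 V)} :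
    IsMatchingSet (G.deleteEdges s) M ↔ IsMatchingSet G M ∧ ∀ e ∈ M, e ∉ s := by
  simp only [IsMatchingSet, edgeSet_deleteEdges, Set.mem_sdiff]
  grind

theorem isMatchingSet_deleteIncidenceSet_iff {w : V} :
    IsMatchingSet (G.deleteIncidenceSet w) M ↔ IsMatchingSet G M ∧ ∀ e ∈ M, w ∉ e := by
  rw [deleteIncidenceSet, isMatchingSet_deleteEdges_iff, incidenceSet]
  grind [IsMatchingSet]

theorem isMatchingSet_insert_iff {e : Sym2 V} (he : e ∉ M) :
    IsMatchingSet G (insert e M) ↔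
      e ∈ G.edgeSet ∧ IsMatchingSet G M ∧ ∀ f ∈ M, ∀ w ∈ e, w ∉ f := by
  simp only [IsMatchingSet, forall_mem_insert]
  grind

theorem IsMatchingSet.card_filter_mem_le_one (hM : IsMatchingSet G M) (w : V) :
    #(M.filter (w ∈ ·)) ≤ 1 := by
  refine card_le_one.2 fun e he f hf => ?_
  rw [mem_filter] at he hf
  by_contra hne
  exact hM.2 e he.1 f hf.1 hne w he.2 hf.2

end IsMatchingSet

theorem deleteIncidenceSet_comm {V : Type*} (G : SimpleGraph V) (u v : V) :
    (G.deleteIncidenceSet u).deleteIncidenceSet v =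
      (G.deleteIncidenceSet v).deleteIncidenceSet u := by
  ext a b
  simp only [deleteIncidenceSet_adj]
  tauto

theorem deleteEdges_eq_deleteIncidenceSet_of_leaf {V : Type*} {G : SimpleGraph V} {u v : V}
    (hleaf : ∀ z, G.Adj v z ↔ z = u) :
    G.deleteEdges {s(u, v)} = G.deleteIncidenceSet v := by
  ext a b
  simp only [deleteEdges_adj, deleteIncidenceSet_adj, Set.mem_singleton_iff]
  grind [G.adj_comm]

theorem prod_ite_mul_eq_pow_mul {ι M : Type*} [CommMonoid M] (s : Finset ι) (p : ι → Prop)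
    [DecidablePred p] (a : M) (x : ι → M) :
    ∏ i ∈ s, (if p i then a * x i else x i) = a ^ #(s.filter p) * ∏ i ∈ s, x i := by
  rw [prod_ite, prod_mul_distrib, prod_const, ← prod_filter_mul_prod_filter_not s p, mul_assoc]

section mmp

variable {V : Type*} [Fintype V] [DecidableEq V] {G : SimpleGraph V}

theorem mem_matchings {M : Finset (Sym2 V)} : M ∈ matchings G ↔ IsMatchingSet G M := by
  simp [matchings]

theorem mmp_congr {x y : Sym2 V → ℝ} (hxy : ∀ e ∈ G.edgeSet, x e = y e) (t : ℝ) :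
    mmp G x t = mmp G y t :=
  sum_congr rfl fun _ hM => by
    rw [prod_congr rfl fun e he => hxy e ((mem_matchings.1 hM).1 e he)]

theorem filter_notMem_matchings {e : Sym2 V} :
    (matchings G).filter (e ∉ ·) = matchings (G.deleteEdges {e}) := by
  ext M
  simp only [mem_filter, mem_matchings, isMatchingSet_deleteEdges_iff, Set.mem_singleton_iff]
  grind

theorem filter_forall_notMem_matchings (w : V) :
    (matchings G).filter (fun M => ∀ e ∈ M, w ∉ e) = matchings (G.deleteIncidenceSet w) := by
  ext M
  simp only [mem_filter, mem_matchings, isMatchingSet_deleteIncidenceSet_iff]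

theorem sum_matchings_mem_edge {u v : V} (huv : G.Adj u v) (f : Finset (Sym2 V) → ℝ) :
    ∑ M ∈ (matchings G).filter (s(u, v) ∈ ·), f M =
      ∑ M ∈ matchings ((G.deleteIncidenceSet u).deleteIncidenceSet v),
        f (insert s(u, v) M) := by
  have hmem : ∀ M, M ∈ matchings ((G.deleteIncidenceSet u).deleteIncidenceSet v) ↔
      IsMatchingSet G M ∧ ∀ e ∈ M, ∀ w ∈ s(u, v), w ∉ e := by
    intro M
    simp only [mem_matchings, isMatchingSet_deleteIncidenceSet_iff, Sym2.mem_iff]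
    grind
  have huvN : ∀ N ∈ matchings ((G.deleteIncidenceSet u).deleteIncidenceSet v), s(u, v) ∉ N :=
    fun N hN h => ((hmem N).1 hN).2 _ h u (Sym2.mem_mk_left u v) (Sym2.mem_mk_left u v)
  refine sum_nbij' (fun M => M.erase s(u, v)) (insert s(u, v)) ?_ ?_ ?_ ?_ ?_
  · intro M hM
    rw [mem_filter, mem_matchings, ← insert_erase hM.2,
      isMatchingSet_insert_iff (notMem_erase _ _)] at hM
    exact (hmem _).2 hM.1.2
  · intro N hN
    rw [mem_filter, mem_matchings, isMatchingSet_insert_iff (huvN N hN)]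
    exact ⟨⟨huv, (hmem N).1 hN⟩, mem_insert_self _ _⟩
  · intro M hM
    exact insert_erase (mem_filter.1 hM).2
  · intro N hN
    exact erase_insert (huvN N hN)
  · intro M hM
    rw [insert_erase (mem_filter.1 hM).2]

theorem mmp_eq_mmp_deleteEdges_sub {u v : V} (huv : G.Adj u v) (x : Sym2 V → ℝ) (t : ℝ) :
    mmp G x t = mmp (G.deleteEdges {s(u, v)}) x t -
      t * x s(u, v) * mmp ((G.deleteIncidenceSet u).deleteIncidenceSet v) x t := by
  have hinsert : ∀ N ∈ matchings ((G.deleteIncidenceSet u).deleteIncidenceSet v),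
      (∏ e ∈ insert s(u, v) N, x e) * (-t) ^ #(insert s(u, v) N) =
        -(t * x s(u, v)) * ((∏ e ∈ N, x e) * (-t) ^ #N) := by
    intro N hN
    have huvN : s(u, v) ∉ N := fun h =>
      (isMatchingSet_deleteIncidenceSet_iff.1 (mem_matchings.1 hN)).2 _ h (Sym2.mem_mk_right u v)
    rw [prod_insert huvN, card_insert_of_notMem huvN]
    ring
  rw [mmp, ← sum_filter_not_add_sum_filter (matchings G) (s(u, v) ∈ ·),
    filter_notMem_matchings, sum_matchings_mem_edge huv, sum_congr rfl hinsert, ← mul_sum,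
    mmp, mmp]
  ring

theorem mmp_scale_incident (w : V) (a : ℝ) (x : Sym2 V → ℝ) (t : ℝ) :
    mmp G (fun e => if w ∈ e then a * x e else x e) t =
      a * mmp G x t + (1 - a) * mmp (G.deleteIncidenceSet w) x t := by
  set p : Finset (Sym2 V) → Prop := fun M => ∀ e ∈ M, w ∉ e
  have hcard : ∀ M ∈ matchings G, #(M.filter (w ∈ ·)) = if p M then 0 else 1 := by
    intro M hM
    have hle := (mem_matchings.1 hM).card_filter_mem_le_one w
    split_ifs with hp
    · simpa [card_eq_zero, filter_eq_empty_iff] using hp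
    · obtain ⟨e, he, hwe⟩ : ∃ e ∈ M, w ∈ e := by simpa [p] using hp
      have : 0 < #(M.filter (w ∈ ·)) := card_pos.2 ⟨e, mem_filter.2 ⟨he, hwe⟩⟩
      omega
  have hterm : ∀ M ∈ matchings G,
      (∏ e ∈ M, if w ∈ e then a * x e else x e) * (-t) ^ #M =
        if p M then (∏ e ∈ M, x e) * (-t) ^ #M else a * ((∏ e ∈ M, x e) * (-t) ^ #M) := by
    intro M hM
    rw [prod_ite_mul_eq_pow_mul, hcard M hM]
    split_ifs <;> ring
  rw [mmp, sum_congr rfl hterm, sum_ite, ← mul_sum, filter_forall_notMem_matchings, mmp, mmp,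
    ← sum_filter_add_sum_filter_not (matchings G) p, filter_forall_notMem_matchings]
  ring

end mmp

theorem stmt_2_general {V : Type*} [Fintype V] [DecidableEq V] (T T' : SimpleGraph V)
    (v u : V)
    (hleaf : ∀ z, T.Adj v z ↔ z = u)
    (hT' : ∀ a b, T'.Adj a b ↔ T.Adj a b ∧ a ≠ v ∧ b ≠ v)
    (x x' : Sym2 V → ℝ) (t : ℝ) (ht : t * x s(u, v) ≠ 1)
    (hx' : ∀ e ∈ T'.edgeSet,
      x' e = if u ∈ e then x e / (1 - t * x s(u, v)) else x e) :
    mmp T x t = (1 - t * x s(u, v)) * mmp T' x' t := by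
  have hc : 1 - t * x s(u, v) ≠ 0 := sub_ne_zero.2 ht.symm
  obtain rfl : T' = T.deleteIncidenceSet v := by
    ext a b
    rw [hT', deleteIncidenceSet_adj]
  have hx'_scaled : mmp (T.deleteIncidenceSet v) x' t = mmp (T.deleteIncidenceSet v)
      (fun e => if u ∈ e then (1 - t * x s(u, v))⁻¹ * x e else x e) t :=
    mmp_congr (fun e he => by rw [hx' e he, div_eq_inv_mul]) t
  rw [hx'_scaled, mmp_scale_incident, mmp_eq_mmp_deleteEdges_sub ((hleaf u).2 rfl).symm,
    deleteEdges_eq_deleteIncidenceSet_of_leaf hleaf, deleteIncidenceSet_comm]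
  field_simp
  ring

/-- Deleting a leaf `v` (with unique neighbor `u`) from a tree `T` and rescaling the variables
on the edges incident to `u` by `1/(1 - t·x_{uv})` gives
`F_T(x,t) = (1 - t·x_{uv}) · F_{T'}(x',t)`. -/
theorem stmt_2 {V : Type*} [Fintype V] [DecidableEq V] (T T' : SimpleGraph V)
    (hT : T.IsTree) (v u : V) (huv : T.Adj u v)
    (hleaf : ∀ z, T.Adj v z ↔ z = u)
    (hT' : ∀ a b, T'.Adj a b ↔ T.Adj a b ∧ a ≠ v ∧ b ≠ v)
    (x x' : Sym2 V → ℝ) (t : ℝ) (ht : t * x s(u, v) ≠ 1)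
    (hx' : ∀ e ∈ T'.edgeSet,
      x' e = if u ∈ e then x e / (1 - t * x s(u, v)) else x e) :
    mmp T x t = (1 - t * x s(u, v)) * mmp T' x' t :=
  stmt_2_general T T' v u hleaf hT' x x' t ht hx'
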